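/- arXiv:2509.12561 — 2 statements merged into one kernel-verified Lean document; each statement's English description precedes it below -/
import Mathlib

section
/- Let m >= 0 and n >= 1 be integers and write n = 2^e * N with e >= 0 an integer and N an odd positive integer. Then Y^(m)(n) = #A1 + #B1 - #A2 - #B2, where A1 = { (d1,d2) in N^2 : d1*d2 = N and d2 - 2^e*d1 is odd and >= 2m+1 }, A2 = { (d1,d2) in N^2 : d1*d2 = N and d2 - 2^{e+1}*d1 is odd and >= 2m+1 }, B1 = { (d1,d2) in N^2 : d1*d2 = N and 2^{e+1}*d2 - d1 is odd and >= 2m+1 }, B2 = { (d1,d2) in N^2 : d1*d2 = N and 2^e*d2 - d1 is odd and >= 2m+1 }, and #S denotes the cardinality of a finite set S. -/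
/-- The geometric series `1/(1-q^k) = ∑_{j ≥ 0} q^{k·j}` as a formal power series over `ℤ`:
its coefficient at `q^n` is `1` exactly when `k ∣ n`. -/
def geomSer (k : ℕ) : PowerSeries ℤ := PowerSeries.mk fun n => if k ∣ n then 1 else 0

/-- The formal power series `∑_{k ≥ 1} (-1)^k q^{k(3k+1)+2mk}/(1-q^{2k})`.
For a fixed `n`, only the (finitely many) summands with `1 ≤ k ≤ n` can contribute to the
coefficient of `q^n` (for `k > n` the lowest exponent `k(3k+1)+2mk` exceeds `n`), so the
coefficient of `q^n` of the infinite sum is the corresponding finite sum of coefficients. -/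
noncomputable def seriesA (m : ℕ) : PowerSeries ℤ :=
  PowerSeries.mk fun n => ∑ k ∈ Finset.Icc 1 n,
    (PowerSeries.coeff (R := ℤ) n)
      (PowerSeries.C (R := ℤ) ((-1) ^ k) * PowerSeries.X ^ (k * (3 * k + 1) + 2 * m * k) *
        geomSer (2 * k))

/-- The formal power series `∑_{k ≥ 1} (-1)^k q^{k(k+1)/2+mk}/(1-q^k)` (same convention). -/
noncomputable def seriesB (m : ℕ) : PowerSeries ℤ :=
  PowerSeries.mk fun n => ∑ k ∈ Finset.Icc 1 n,
    (PowerSeries.coeff (R := ℤ) n)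
      (PowerSeries.C (R := ℤ) ((-1) ^ k) * PowerSeries.X ^ (k * (k + 1) / 2 + m * k) * geomSer k)

/-- The formal power series `∑_{k ≥ 1} (-1)^k q^{k(k+1)+2mk}/(1-q^{2k})` (same convention). -/
noncomputable def seriesC (m : ℕ) : PowerSeries ℤ :=
  PowerSeries.mk fun n => ∑ k ∈ Finset.Icc 1 n,
    (PowerSeries.coeff (R := ℤ) n)
      (PowerSeries.C (R := ℤ) ((-1) ^ k) * PowerSeries.X ^ (k * (k + 1) + 2 * m * k) *
        geomSer (2 * k))

/-!
Writing `l = k + 2m + 1 + 2j`, the coefficient of `q^n` in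
`∑ (-1)^k q^{k(k+1)+2mk}/(1-q^{2k})` is the sum of `(-1)^k` over the factorizations `n = k·l`
with `l - k` odd and at least `2m + 1`, and the coefficient of `q^n` in
`∑ (-1)^k q^{k(k+1)/2+mk}/(1-q^k)` is the same signed count for `2n`.
If `M = 2^f·N` with `N` odd and `l - k` is odd, exactly one of `k`, `l` is even and it carries the
whole factor `2^f`: the factorizations with `k = 2^f·d₁` even are counted with `+1`, those with
`l = 2^f·d₂` with `-1`. Taking `f = e` for `n` and `f = e + 1` for `2n` gives the four sets.
-/

open Finset

lemma coeff_C_mul_X_pow_mul_geomSer (a : ℤ) (E K n : ℕ) :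
    PowerSeries.coeff n (PowerSeries.C a * PowerSeries.X ^ E * geomSer K)
      = if E ≤ n ∧ K ∣ n - E then a else 0 := by
  rw [mul_right_comm, PowerSeries.coeff_mul_X_pow', geomSer]
  by_cases hE : E ≤ n
  · rw [if_pos hE, PowerSeries.coeff_C_mul, PowerSeries.coeff_mk]
    split_ifs <;> simp_all
  · rw [if_neg hE, if_neg (by tauto)]

def oddGapPairs (m M : ℕ) : Finset (ℕ × ℕ) :=
  M.divisorsAntidiagonal.filter fun p =>
    Odd ((p.2 : ℤ) - p.1) ∧ 2 * (m : ℤ) + 1 ≤ (p.2 : ℤ) - p.1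

lemma mem_oddGapPairs {m M : ℕ} {p : ℕ × ℕ} :
    p ∈ oddGapPairs m M ↔ p.1 * p.2 = M ∧ M ≠ 0 ∧
      Odd ((p.2 : ℤ) - p.1) ∧ 2 * (m : ℤ) + 1 ≤ (p.2 : ℤ) - p.1 := by
  simp [oddGapPairs, and_assoc]

lemma exists_mk_mem_oddGapPairs_iff {m M k : ℕ} (hk : 0 < k) :
    (∃ l, (k, l) ∈ oddGapPairs m M) ↔ ∃ j, M = k * (k + 2 * m + 1 + 2 * j) := by
  simp only [mem_oddGapPairs]
  constructor
  · rintro ⟨l, rfl, -, ⟨t, ht⟩, hle⟩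
    exact ⟨(t - m).toNat, by congr 1; omega⟩
  · rintro ⟨j, rfl⟩
    refine ⟨k + 2 * m + 1 + 2 * j, rfl, by positivity, ⟨m + j, by push_cast; ring⟩, ?_⟩
    push_cast
    omega

lemma fst_mul_succ_le_of_mem_oddGapPairs {m M : ℕ} {p : ℕ × ℕ} (hp : p ∈ oddGapPairs m M) :
    p.1 * (p.1 + 1) ≤ M := by
  obtain ⟨rfl, -, -, hle⟩ := mem_oddGapPairs.1 hp
  exact Nat.mul_le_mul_left _ (by omega)

lemma sum_ite_Icc_eq_sum_oddGapPairs {m M B : ℕ} (c : ℕ → Prop) [DecidablePred c]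
    (hc : ∀ k, 0 < k → (c k ↔ ∃ j, M = k * (k + 2 * m + 1 + 2 * j)))
    (hB : ∀ p ∈ oddGapPairs m M, p.1 ≤ B) :
    ∑ k ∈ Icc 1 B, (if c k then (-1 : ℤ) ^ k else 0) = ∑ p ∈ oddGapPairs m M, (-1) ^ p.1 := by
  rw [← sum_filter]
  symm
  refine sum_nbij Prod.fst (fun p hp => ?_) (fun p hp q hq hpq => ?_) (fun k hk => ?_)
    fun _ _ => rfl
  · obtain ⟨hpM, hM, -⟩ := mem_oddGapPairs.1 hp
    have h1 : 0 < p.1 := Nat.pos_of_ne_zero (left_ne_zero_of_mul (hpM ▸ hM))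
    exact mem_filter.2 ⟨mem_Icc.2 ⟨h1, hB p hp⟩,
      (hc _ h1).2 ((exists_mk_mem_oddGapPairs_iff h1).1 ⟨p.2, hp⟩)⟩
  · obtain ⟨hpM, hM, -⟩ := mem_oddGapPairs.1 hp
    obtain ⟨hqM, -⟩ := mem_oddGapPairs.1 hq
    have h1 : p.1 ≠ 0 := left_ne_zero_of_mul (hpM ▸ hM)
    refine Prod.ext hpq (Nat.eq_of_mul_eq_mul_left (Nat.pos_of_ne_zero h1) ?_)
    rw [hpM, hpq, hqM]
  · obtain ⟨hkB, hck⟩ := mem_filter.1 hk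
    have h1 : 0 < k := (mem_Icc.1 hkB).1
    obtain ⟨l, hl⟩ := (exists_mk_mem_oddGapPairs_iff h1).2 ((hc k h1).1 hck)
    exact ⟨(k, l), hl, rfl⟩

lemma coeff_seriesC (m n : ℕ) :
    PowerSeries.coeff n (seriesC m) = ∑ p ∈ oddGapPairs m n, (-1) ^ p.1 := by
  rw [seriesC, PowerSeries.coeff_mk]
  simp only [coeff_C_mul_X_pow_mul_geomSer]
  refine sum_ite_Icc_eq_sum_oddGapPairs
    (fun k => k * (k + 1) + 2 * m * k ≤ n ∧ 2 * k ∣ n - (k * (k + 1) + 2 * m * k))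
    (fun k _ => ?_) fun p hp => ?_
  · constructor
    · rintro ⟨hle, j, hj⟩
      exact ⟨j, by rw [← Nat.sub_add_cancel hle, hj]; ring⟩
    · rintro ⟨j, rfl⟩
      have h : k * (k + 2 * m + 1 + 2 * j) = k * (k + 1) + 2 * m * k + 2 * k * j := by ring
      exact ⟨by omega, j, by omega⟩
  · have := fst_mul_succ_le_of_mem_oddGapPairs hp
    nlinarith

lemma coeff_seriesB (m n : ℕ) :
    PowerSeries.coeff n (seriesB m) = ∑ p ∈ oddGapPairs m (2 * n), (-1) ^ p.1 := by
  rw [seriesB, PowerSeries.coeff_mk]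
  simp only [coeff_C_mul_X_pow_mul_geomSer]
  refine sum_ite_Icc_eq_sum_oddGapPairs
    (fun k => k * (k + 1) / 2 + m * k ≤ n ∧ k ∣ n - (k * (k + 1) / 2 + m * k))
    (fun k _ => ?_) fun p hp => ?_
  · have h2 : 2 * (k * (k + 1) / 2) = k * (k + 1) :=
      Nat.mul_div_cancel' (Nat.even_mul_succ_self k).two_dvd
    constructor
    · rintro ⟨hle, j, hj⟩
      refine ⟨j, ?_⟩
      have : k * (k + 2 * m + 1 + 2 * j) = k * (k + 1) + 2 * (m * k) + 2 * (k * j) := by ring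
      omega
    · rintro ⟨j, hj⟩
      have : k * (k + 2 * m + 1 + 2 * j) = k * (k + 1) + 2 * (m * k) + 2 * (k * j) := by ring
      exact ⟨by omega, j, by omega⟩
  · have := fst_mul_succ_le_of_mem_oddGapPairs hp
    nlinarith

lemma two_pow_dvd_of_mul_eq_of_odd {f k l N : ℕ} (hl : Odd l) (h : k * l = 2 ^ f * N) :
    2 ^ f ∣ k :=
  (Nat.Coprime.pow_left f (Nat.coprime_two_left.2 hl)).dvd_of_dvd_mul_right ⟨N, h⟩

lemma odd_iff_even_of_odd_sub {k l : ℕ} (h : Odd ((l : ℤ) - k)) : Odd l ↔ Even k := by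
  simpa only [Int.odd_coe_nat, Int.even_coe_nat] using Int.odd_sub.1 h

lemma odd_and_odd_of_mem_divisorsAntidiagonal {N : ℕ} (hN : Odd N) {p : ℕ × ℕ}
    (hp : p ∈ N.divisorsAntidiagonal) : Odd p.1 ∧ Odd p.2 :=
  Nat.odd_mul.1 ((Nat.mem_divisorsAntidiagonal.1 hp).1 ▸ hN)

section TwoPowMul

variable {m f N : ℕ}

lemma card_filter_even_oddGapPairs (hN : Odd N) :
    #((oddGapPairs m (2 ^ f * N)).filter fun p => Even p.1) =
      #(N.divisorsAntidiagonal.filter fun p =>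
        Odd ((p.2 : ℤ) - 2 ^ f * p.1) ∧ 2 * (m : ℤ) + 1 ≤ (p.2 : ℤ) - 2 ^ f * p.1) := by
  symm
  refine card_bij (fun p _ => (2 ^ f * p.1, p.2)) (fun p hp => ?_) (fun p _ q _ h => ?_)
    fun q hq => ?_
  · obtain ⟨hpN, hodd, hle⟩ := mem_filter.1 hp
    obtain ⟨hprod, hN0⟩ := Nat.mem_divisorsAntidiagonal.1 hpN
    have hodd' : Odd ((p.2 : ℤ) - ((2 ^ f * p.1 : ℕ) : ℤ)) := by push_cast; exact hodd
    refine mem_filter.2 ⟨mem_oddGapPairs.2 ⟨by rw [← hprod]; ring, by positivity, hodd',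
      by push_cast; exact hle⟩, ?_⟩
    exact (odd_iff_even_of_odd_sub hodd').1 (odd_and_odd_of_mem_divisorsAntidiagonal hN hpN).2
  · obtain ⟨h1, h2⟩ := Prod.mk.inj h
    exact Prod.ext (Nat.eq_of_mul_eq_mul_left (by positivity) h1) h2
  · obtain ⟨hq, heven⟩ := mem_filter.1 hq
    obtain ⟨hprod, hM, hodd, hle⟩ := mem_oddGapPairs.1 hq
    obtain ⟨d, hd⟩ := two_pow_dvd_of_mul_eq_of_odd ((odd_iff_even_of_odd_sub hodd).2 heven) hprod
    refine ⟨(d, q.2), mem_filter.2 ⟨Nat.mem_divisorsAntidiagonal.2 ⟨?_, hN.pos.ne'⟩, ?_⟩,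
      Prod.ext hd.symm rfl⟩
    · refine Nat.eq_of_mul_eq_mul_left (by positivity : 0 < 2 ^ f) ?_
      rw [← hprod, hd, mul_assoc]
    · rw [hd] at hodd hle
      push_cast at hodd hle
      exact ⟨hodd, hle⟩

lemma card_filter_not_even_oddGapPairs (hN : Odd N) :
    #((oddGapPairs m (2 ^ f * N)).filter fun p => ¬Even p.1) =
      #(N.divisorsAntidiagonal.filter fun p =>
        Odd (2 ^ f * (p.2 : ℤ) - p.1) ∧ 2 * (m : ℤ) + 1 ≤ 2 ^ f * (p.2 : ℤ) - p.1) := by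
  symm
  refine card_bij (fun p _ => (p.1, 2 ^ f * p.2)) (fun p hp => ?_) (fun p _ q _ h => ?_)
    fun q hq => ?_
  · obtain ⟨hpN, hodd, hle⟩ := mem_filter.1 hp
    obtain ⟨hprod, hN0⟩ := Nat.mem_divisorsAntidiagonal.1 hpN
    refine mem_filter.2 ⟨mem_oddGapPairs.2 ⟨by rw [← hprod]; ring, by positivity,
      by push_cast; exact hodd, by push_cast; exact hle⟩, ?_⟩
    exact Nat.not_even_iff_odd.2 (odd_and_odd_of_mem_divisorsAntidiagonal hN hpN).1
  · obtain ⟨h1, h2⟩ := Prod.mk.inj h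
    exact Prod.ext h1 (Nat.eq_of_mul_eq_mul_left (by positivity) h2)
  · obtain ⟨hq, hodd1⟩ := mem_filter.1 hq
    obtain ⟨hprod, hM, hodd, hle⟩ := mem_oddGapPairs.1 hq
    obtain ⟨d, hd⟩ := two_pow_dvd_of_mul_eq_of_odd (Nat.not_even_iff_odd.1 hodd1)
      ((mul_comm _ _).trans hprod)
    refine ⟨(q.1, d), mem_filter.2 ⟨Nat.mem_divisorsAntidiagonal.2 ⟨?_, hN.pos.ne'⟩, ?_⟩,
      Prod.ext rfl hd.symm⟩
    · refine Nat.eq_of_mul_eq_mul_left (by positivity : 0 < 2 ^ f) ?_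
      rw [← hprod, hd]
      ring
    · rw [hd] at hodd hle
      push_cast at hodd hle
      exact ⟨hodd, hle⟩

lemma sum_oddGapPairs_two_pow_mul (hN : Odd N) :
    ∑ p ∈ oddGapPairs m (2 ^ f * N), (-1 : ℤ) ^ p.1 =
      #(N.divisorsAntidiagonal.filter fun p =>
        Odd ((p.2 : ℤ) - 2 ^ f * p.1) ∧ 2 * (m : ℤ) + 1 ≤ (p.2 : ℤ) - 2 ^ f * p.1) -
      #(N.divisorsAntidiagonal.filter fun p =>
        Odd (2 ^ f * (p.2 : ℤ) - p.1) ∧ 2 * (m : ℤ) + 1 ≤ 2 ^ f * (p.2 : ℤ) - p.1) := by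
  rw [← card_filter_even_oddGapPairs hN, ← card_filter_not_even_oddGapPairs hN,
    ← sum_filter_add_sum_filter_not _ fun p => Even p.1,
    sum_congr rfl fun p hp => (mem_filter.1 hp).2.neg_one_pow,
    sum_congr rfl fun p hp => (Nat.not_even_iff_odd.1 (mem_filter.1 hp).2).neg_one_pow]
  simp only [sum_const, nsmul_eq_mul, mul_one, mul_neg]
  ring

end TwoPowMul

lemma ncard_setOf_pos_mul_eq (N : ℕ) (P : ℕ × ℕ → Prop) [DecidablePred P] :
    {p : ℕ × ℕ | 0 < p.1 ∧ 0 < p.2 ∧ p.1 * p.2 = N ∧ P p}.ncard =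
      #(N.divisorsAntidiagonal.filter P) := by
  rw [← Set.ncard_coe_finset]
  congr 1
  ext p
  simp only [coe_filter, Set.mem_ofPred_eq, Nat.mem_divisorsAntidiagonal]
  constructor
  · rintro ⟨h1, h2, hprod, hP⟩
    exact ⟨⟨hprod, hprod ▸ (Nat.mul_pos h1 h2).ne'⟩, hP⟩
  · rintro ⟨⟨hprod, hN⟩, hP⟩
    obtain ⟨h1, h2⟩ := mul_ne_zero_iff.1 (hprod ▸ hN)
    exact ⟨Nat.pos_of_ne_zero h1, Nat.pos_of_ne_zero h2, hprod, hP⟩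

theorem stmt9_general (m : ℕ) (Y : ℕ → ℤ)
    (hY : PowerSeries.mk Y = seriesC m - seriesB m)
    (n : ℕ) (e N : ℕ) (hN : Odd N) (hne : n = 2 ^ e * N) :
    Y n =
      (Set.ncard {p : ℕ × ℕ | 0 < p.1 ∧ 0 < p.2 ∧ p.1 * p.2 = N ∧
          Odd ((p.2 : ℤ) - 2 ^ e * (p.1 : ℤ)) ∧
          2 * (m : ℤ) + 1 ≤ (p.2 : ℤ) - 2 ^ e * (p.1 : ℤ)} : ℤ)
      + (Set.ncard {p : ℕ × ℕ | 0 < p.1 ∧ 0 < p.2 ∧ p.1 * p.2 = N ∧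
          Odd (2 ^ (e + 1) * (p.2 : ℤ) - (p.1 : ℤ)) ∧
          2 * (m : ℤ) + 1 ≤ 2 ^ (e + 1) * (p.2 : ℤ) - (p.1 : ℤ)} : ℤ)
      - (Set.ncard {p : ℕ × ℕ | 0 < p.1 ∧ 0 < p.2 ∧ p.1 * p.2 = N ∧
          Odd ((p.2 : ℤ) - 2 ^ (e + 1) * (p.1 : ℤ)) ∧
          2 * (m : ℤ) + 1 ≤ (p.2 : ℤ) - 2 ^ (e + 1) * (p.1 : ℤ)} : ℤ)
      - (Set.ncard {p : ℕ × ℕ | 0 < p.1 ∧ 0 < p.2 ∧ p.1 * p.2 = N ∧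
          Odd (2 ^ e * (p.2 : ℤ) - (p.1 : ℤ)) ∧
          2 * (m : ℤ) + 1 ≤ 2 ^ e * (p.2 : ℤ) - (p.1 : ℤ)} : ℤ) := by
  subst hne
  have hcoeff := congrArg (PowerSeries.coeff (2 ^ e * N)) hY
  rw [PowerSeries.coeff_mk, map_sub, coeff_seriesC, coeff_seriesB,
    show 2 * (2 ^ e * N) = 2 ^ (e + 1) * N by ring,
    sum_oddGapPairs_two_pow_mul hN, sum_oddGapPairs_two_pow_mul hN] at hcoeff
  simp only [ncard_setOf_pos_mul_eq]
  rw [hcoeff]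
  ring

/-- Let `m ≥ 0` and `n ≥ 1` be integers, write `n = 2^e · N` with `N` odd,
and let `Y^(m)` be defined by `∑_{n ≥ 0} Y^(m)(n) q^n = ∑_{k≥1} (-1)^k
q^{k(k+1)+2mk}/(1-q^{2k}) - ∑_{k≥1} (-1)^k q^{k(k+1)/2+mk}/(1-q^k)`. Then
`Y^(m)(n) = #A₁ + #B₁ - #A₂ - #B₂`, where (as subsets of pairs of positive integers)
`A₁ = {(d₁,d₂) : d₁d₂ = N, d₂ - 2^e d₁ odd and ≥ 2m+1}`,
`A₂ = {(d₁,d₂) : d₁d₂ = N, d₂ - 2^{e+1} d₁ odd and ≥ 2m+1}`,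
`B₁ = {(d₁,d₂) : d₁d₂ = N, 2^{e+1} d₂ - d₁ odd and ≥ 2m+1}`,
`B₂ = {(d₁,d₂) : d₁d₂ = N, 2^e d₂ - d₁ odd and ≥ 2m+1}`. -/
theorem stmt9 (m : ℕ) (Y : ℕ → ℤ)
    (hY : PowerSeries.mk Y = seriesC m - seriesB m)
    (n : ℕ) (hn : 1 ≤ n) (e N : ℕ) (hN : Odd N) (hne : n = 2 ^ e * N) :
    Y n =
      (Set.ncard {p : ℕ × ℕ | 0 < p.1 ∧ 0 < p.2 ∧ p.1 * p.2 = N ∧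
          Odd ((p.2 : ℤ) - 2 ^ e * (p.1 : ℤ)) ∧
          2 * (m : ℤ) + 1 ≤ (p.2 : ℤ) - 2 ^ e * (p.1 : ℤ)} : ℤ)
      + (Set.ncard {p : ℕ × ℕ | 0 < p.1 ∧ 0 < p.2 ∧ p.1 * p.2 = N ∧
          Odd (2 ^ (e + 1) * (p.2 : ℤ) - (p.1 : ℤ)) ∧
          2 * (m : ℤ) + 1 ≤ 2 ^ (e + 1) * (p.2 : ℤ) - (p.1 : ℤ)} : ℤ)
      - (Set.ncard {p : ℕ × ℕ | 0 < p.1 ∧ 0 < p.2 ∧ p.1 * p.2 = N ∧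
          Odd ((p.2 : ℤ) - 2 ^ (e + 1) * (p.1 : ℤ)) ∧
          2 * (m : ℤ) + 1 ≤ (p.2 : ℤ) - 2 ^ (e + 1) * (p.1 : ℤ)} : ℤ)
      - (Set.ncard {p : ℕ × ℕ | 0 < p.1 ∧ 0 < p.2 ∧ p.1 * p.2 = N ∧
          Odd (2 ^ e * (p.2 : ℤ) - (p.1 : ℤ)) ∧
          2 * (m : ℤ) + 1 ≤ 2 ^ e * (p.2 : ℤ) - (p.1 : ℤ)} : ℤ) :=
  stmt9_general m Y hY n e N hN hne
end

section
/- Let m >= 0 be an integer. For every n >= 1, the coefficient of q^n in the formal power series sum_{k>=1} (-1)^k q^{k(3k+1)+2mk}/(1-q^{2k}) equals #{ (d1,d2) in N^2 : d1*d2 = n, d1 odd, d1 - 3*d2 >= 2m+1 } - #{ (d1,d2) in N^2 : d1*d2 = n, d1 odd, d2 - 3*d1 >= 2m+1 }. -/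
/-! The coefficient of `q^n` is the sum of `(-1)^k` over the factorisations `n = k * l` with
`l ≥ 3k + 2m + 1` and `k + l` odd. When `k + l` is odd, `(-1)^k = [l odd] - [k odd]`, and when it
is even this difference vanishes, so the parity condition can be dropped; the two terms then count
the pairs `(d₁, d₂) = (l, k)` and `(d₁, d₂) = (k, l)` of the two sets. -/

open PowerSeries

lemma coeff_C_mul_X_pow_mul_geomSer_s13 (c : ℤ) (e d n : ℕ) :
    coeff n (C c * X ^ e * geomSer d) = if e ≤ n ∧ d ∣ n - e then c else 0 := by
  rw [mul_assoc, coeff_C_mul, mul_comm (X ^ e), coeff_mul_X_pow']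
  by_cases h : e ≤ n <;> simp [h, geomSer]

lemma le_and_two_mul_dvd_sub_iff {k l m : ℕ} (hk : 0 < k) :
    k * (3 * k + 1) + 2 * m * k ≤ k * l ∧ 2 * k ∣ k * l - (k * (3 * k + 1) + 2 * m * k) ↔
      3 * k + 2 * m + 1 ≤ l ∧ Odd (k + l) := by
  have he : k * (3 * k + 1) + 2 * m * k = k * (3 * k + 2 * m + 1) := by ring
  rw [he, ← Nat.mul_sub, mul_comm 2 k, Nat.mul_dvd_mul_iff_left hk,
    Nat.mul_le_mul_left_iff hk, Nat.odd_iff, Nat.dvd_iff_mod_eq_zero]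
  omega

lemma not_two_mul_dvd_sub_of_not_dvd {k e n : ℕ} (hke : k ∣ e) (hkn : ¬ k ∣ n)
    (hen : e ≤ n) :
    ¬ 2 * k ∣ n - e := fun h =>
  hkn <| (Nat.dvd_sub_iff_left hen hke).mp ((Dvd.intro_left 2 rfl).trans h)

lemma ite_and_odd_add_neg_one_pow (A : Prop) [Decidable A] (k l : ℕ) :
    (if A ∧ Odd (k + l) then (-1 : ℤ) ^ k else 0) =
      (if Odd l ∧ A then 1 else 0) - (if Odd k ∧ A then 1 else 0) := by
  by_cases hA : A <;> rcases Nat.even_or_odd k with hk | hk <;>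
    rcases Nat.even_or_odd l with hl | hl <;>
    simp [hA, hk, hl, hk.neg_one_pow, Nat.odd_add, Nat.not_odd_iff_even.mpr,
      Nat.not_even_iff_odd.mpr]

lemma ncard_pos_mul_eq (n : ℕ) (P : ℕ × ℕ → Prop) [DecidablePred P] :
    {p : ℕ × ℕ | 0 < p.1 ∧ 0 < p.2 ∧ p.1 * p.2 = n ∧ P p}.ncard =
      (n.divisorsAntidiagonal.filter P).card := by
  rw [← Set.ncard_coe_finset]
  congr 1
  ext ⟨a, b⟩
  simp only [Set.mem_ofPred_eq, Finset.coe_filter, Nat.mem_divisorsAntidiagonal]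
  constructor
  · rintro ⟨ha, hb, hab, hP⟩
    exact ⟨⟨hab, hab ▸ (Nat.mul_pos ha hb).ne'⟩, hP⟩
  · rintro ⟨⟨hab, hn⟩, hP⟩
    subst hab
    exact ⟨Nat.pos_of_ne_zero (left_ne_zero_of_mul hn),
      Nat.pos_of_ne_zero (right_ne_zero_of_mul hn), rfl, hP⟩

lemma card_filter_divisorsAntidiagonal_swap (n : ℕ) (P : ℕ × ℕ → Prop) [DecidablePred P] :
    (n.divisorsAntidiagonal.filter P).card =
      (n.divisorsAntidiagonal.filter fun p => P p.swap).card := by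
  conv_lhs => rw [← Nat.map_swap_divisorsAntidiagonal, Finset.filter_map, Finset.card_map]
  rfl

lemma coeff_seriesA (m n : ℕ) :
    coeff n (seriesA m) = ∑ p ∈ n.divisorsAntidiagonal,
      if 3 * p.1 + 2 * m + 1 ≤ p.2 ∧ Odd (p.1 + p.2) then (-1 : ℤ) ^ p.1 else 0 := by
  rw [seriesA, coeff_mk, Nat.sum_divisorsAntidiagonal
    (fun k l => if 3 * k + 2 * m + 1 ≤ l ∧ Odd (k + l) then (-1 : ℤ) ^ k else 0)]
  simp_rw [coeff_C_mul_X_pow_mul_geomSer_s13]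
  rw [← Finset.sum_subset (s₁ := n.divisors)]
  · refine Finset.sum_congr rfl fun k hk => ?_
    obtain ⟨⟨l, rfl⟩, hn⟩ := Nat.mem_divisors.mp hk
    have hk : 0 < k := Nat.pos_of_ne_zero (left_ne_zero_of_mul hn)
    rw [Nat.mul_div_cancel_left _ hk]
    exact if_congr (le_and_two_mul_dvd_sub_iff hk) rfl rfl
  · intro k hk
    obtain ⟨⟨l, rfl⟩, hn⟩ := Nat.mem_divisors.mp hk
    exact Finset.mem_Icc.mpr ⟨Nat.pos_of_ne_zero (left_ne_zero_of_mul hn), Nat.divisor_le hk⟩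
  · intro k hk hkn
    rw [if_neg]
    rintro ⟨hen, hdvd⟩
    refine not_two_mul_dvd_sub_of_not_dvd (dvd_add (dvd_mul_right _ _) (dvd_mul_left _ _))
      (fun hdvd => hkn (Nat.mem_divisors.mpr ⟨hdvd, ?_⟩)) hen hdvd
    have := Finset.mem_Icc.mp hk
    omega

theorem stmt13_general (m : ℕ) (n : ℕ) :
    (PowerSeries.coeff (R := ℤ) n) (seriesA m) =
      (Set.ncard {p : ℕ × ℕ | 0 < p.1 ∧ 0 < p.2 ∧ p.1 * p.2 = n ∧ Odd p.1 ∧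
          2 * (m : ℤ) + 1 ≤ (p.1 : ℤ) - 3 * (p.2 : ℤ)} : ℤ)
      - (Set.ncard {p : ℕ × ℕ | 0 < p.1 ∧ 0 < p.2 ∧ p.1 * p.2 = n ∧ Odd p.1 ∧
          2 * (m : ℤ) + 1 ≤ (p.2 : ℤ) - 3 * (p.1 : ℤ)} : ℤ) := by
  rw [coeff_seriesA, ncard_pos_mul_eq, ncard_pos_mul_eq, card_filter_divisorsAntidiagonal_swap,
    Finset.natCast_card_filter, Finset.natCast_card_filter, ← Finset.sum_sub_distrib]
  refine Finset.sum_congr rfl fun p _ => ?_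
  have hA : 2 * (m : ℤ) + 1 ≤ p.2 - 3 * p.1 ↔ 3 * p.1 + 2 * m + 1 ≤ p.2 := by omega
  simp only [ite_and_odd_add_neg_one_pow, Prod.fst_swap, Prod.snd_swap, hA]

/-- Let `m ≥ 0` be an integer. For every `n ≥ 1`, the coefficient of
`q^n` in `∑_{k≥1} (-1)^k q^{k(3k+1)+2mk}/(1-q^{2k})` equals
`#{(d₁,d₂) positive : d₁d₂ = n, d₁ odd, d₁ - 3d₂ ≥ 2m+1}
- #{(d₁,d₂) positive : d₁d₂ = n, d₁ odd, d₂ - 3d₁ ≥ 2m+1}`. -/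
theorem stmt13 (m : ℕ) (n : ℕ) (hn : 1 ≤ n) :
    (PowerSeries.coeff (R := ℤ) n) (seriesA m) =
      (Set.ncard {p : ℕ × ℕ | 0 < p.1 ∧ 0 < p.2 ∧ p.1 * p.2 = n ∧ Odd p.1 ∧
          2 * (m : ℤ) + 1 ≤ (p.1 : ℤ) - 3 * (p.2 : ℤ)} : ℤ)
      - (Set.ncard {p : ℕ × ℕ | 0 < p.1 ∧ 0 < p.2 ∧ p.1 * p.2 = n ∧ Odd p.1 ∧
          2 * (m : ℤ) + 1 ≤ (p.2 : ℤ) - 3 * (p.1 : ℤ)} : ℤ) :=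
  stmt13_general m n
end
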